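/- Let ω be an environment with potential V, let a < b be integers and let z be an integer with a ≤ z ≤ b. Let (Ω, ℱ, (ℱ_n)_{n∈ℕ}, ℙ) be a filtered probability space and (ξ_n)_{n∈ℕ} an adapted ℤ-valued process with ξ_0 = z constant, such that almost surely for every n, 𝔼[1_{{ξ_{n+1} = ξ_n + 1}} | ℱ_n] = ω⁺_{ξ_n}/(ω⁺_{ξ_n} + ω⁻_{ξ_n}) and 𝔼[1_{{ξ_{n+1} = ξ_n − 1}} | ℱ_n] = ω⁻_{ξ_n}/(ω⁺_{ξ_n} + ω⁻_{ξ_n}). Let τ_a = inf{n ≥ 0 : ξ_n = a} and τ_b = inf{n ≥ 0 : ξ_n = b} be the hitting times of a and b. Then ℙ(τ_a < τ_b) = (Σ_{i=z}^{b−1} e^{V(i)}) / (Σ_{j=a}^{b−1} e^{V(j)}), where the numerator is the empty sum 0 when z = b. -/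

import Mathlib

/-
The function `h x = (∑_{i=x}^{b-1} e^{V i}) / (∑_{j=a}^{b-1} e^{V j})` equals `1` at `a` and `0`
at `b`, and is harmonic for the walk strictly between them because
`ω⁺_x e^{V x} = ω⁻_x e^{V (x-1)}`. So `h` along the walk stopped on hitting `{a, b}` is a bounded
martingale. It converges almost surely, and as long as the walk is strictly between `a` and `b`
its increments stay away from `0`; hence the walk hits `{a, b}` almost surely and the limit is the
indicator of `{τ_a < τ_b}`. Dominated convergence gives `ℙ(τ_a < τ_b) = h z`.
-/

open Real MeasureTheory ProbabilityTheory

noncomputable def potential (ωm ωp : ℤ → ℝ) : ℤ → ℝ := fun x =>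
  if 0 ≤ x then ∑ i ∈ Finset.range x.toNat, Real.log (ωm ((i : ℤ) + 1) / ωp ((i : ℤ) + 1))
  else ∑ i ∈ Finset.range (-x).toNat, Real.log (ωp (x + 1 + (i : ℤ)) / ωm (x + 1 + (i : ℤ)))

/-- Equal to `∞` if `c` is never hit. -/
noncomputable def hitTime {Ω : Type*} (ξ : ℕ → Ω → ℤ) (c : ℤ) (ω' : Ω) : ℕ∞ :=
  sInf ((fun k : ℕ => (k : ℕ∞)) '' {k : ℕ | ξ k ω' = c})

open Finset Filter Topology

section Potential

variable (ωm ωp : ℤ → ℝ)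

lemma potential_of_nonpos {x : ℤ} (hx : x ≤ 0) :
    potential ωm ωp x =
      ∑ i ∈ range (-x).toNat, log (ωp (x + 1 + (i : ℤ)) / ωm (x + 1 + (i : ℤ))) := by
  rcases hx.lt_or_eq with hx | rfl
  · exact if_neg hx.not_ge
  · simp [potential]

lemma potential_sub_potential_sub_one (x : ℤ) :
    potential ωm ωp x - potential ωm ωp (x - 1) = log (ωm x / ωp x) := by
  rcases le_or_gt 1 x with hx | hx
  · have hx' : x.toNat = (x - 1).toNat + 1 := by omega
    have hlast : ((x - 1).toNat : ℤ) + 1 = x := by omega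
    rw [potential, potential, if_pos (by omega), if_pos (by omega), hx', sum_range_succ, hlast]
    ring
  · have hx' : (-(x - 1)).toNat = (-x).toNat + 1 := by omega
    rw [potential_of_nonpos _ _ (by omega), potential_of_nonpos _ _ (by omega), hx',
      sum_range_succ']
    have hshift : ∀ i : ℕ, x + ((i + 1 : ℕ) : ℤ) = x + 1 + i := fun i => by push_cast; ring
    simp only [sub_add_cancel, hshift, Nat.cast_zero, add_zero]
    rw [← inv_div, Real.log_inv]
    ring

lemma mul_exp_potential (hm : ∀ x, 0 < ωm x) (hp : ∀ x, 0 < ωp x) (x : ℤ) :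
    ωp x * exp (potential ωm ωp x) = ωm x * exp (potential ωm ωp (x - 1)) := by
  rw [← sub_add_cancel (potential ωm ωp x) (potential ωm ωp (x - 1)),
    potential_sub_potential_sub_one, exp_add, exp_log (div_pos (hm x) (hp x))]
  field_simp [(hp x).ne']

end Potential

/-- The `max` makes it constant left of `a`, as it is (zero) right of `b`. -/
noncomputable def ruinProb (w : ℤ → ℝ) (a b x : ℤ) : ℝ :=
  (∑ i ∈ Icc (max a x) (b - 1), w i) / ∑ i ∈ Icc a (b - 1), w i

namespace ruinProb

variable {w : ℤ → ℝ} {a b x : ℤ}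

lemma eq_left_of_le (hx : x ≤ a) : ruinProb w a b x = ruinProb w a b a := by
  simp only [ruinProb, max_eq_left hx, max_self]

lemma left_eq_one (hw : ∀ x, 0 < w x) (hab : a < b) : ruinProb w a b a = 1 := by
  refine (div_eq_one_iff_eq ?_).2 (by rw [max_self])
  exact (sum_pos (fun i _ => hw i) ⟨a, by simp; omega⟩).ne'

lemma eq_zero_of_ge (hx : b ≤ x) : ruinProb w a b x = 0 := by
  rw [ruinProb, Icc_eq_empty (by omega), sum_empty, zero_div]

lemma sub_add_one (hax : a ≤ x) (hxb : x < b) :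
    ruinProb w a b x - ruinProb w a b (x + 1) = w x / ∑ i ∈ Icc a (b - 1), w i := by
  have hIcc : Icc x (b - 1) = insert x (Icc (x + 1) (b - 1)) := by
    ext i; simp only [mem_Icc, mem_insert]; omega
  rw [ruinProb, ruinProb, max_eq_right hax, max_eq_right (by omega), ← sub_div, hIcc,
    sum_insert (by simp), add_sub_cancel_right]

lemma abs_le_one (hw : ∀ x, 0 ≤ w x) : |ruinProb w a b x| ≤ 1 := by
  have hsum : ∀ s : Finset ℤ, 0 ≤ ∑ i ∈ s, w i := fun s => sum_nonneg fun i _ => hw i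
  rw [ruinProb, abs_of_nonneg (div_nonneg (hsum _) (hsum _))]
  exact div_le_one_of_le₀ (sum_le_sum_of_subset_of_nonneg (Icc_subset_Icc le_sup_left le_rfl)
    fun i _ _ => hw i) (hsum _)

lemma add_one_ne (hw : ∀ x, 0 < w x) (hax : a ≤ x) (hxb : x < b) :
    ruinProb w a b (x + 1) ≠ ruinProb w a b x := by
  refine (sub_pos.1 ?_).ne
  rw [sub_add_one hax hxb]
  exact div_pos (hw x) (sum_pos (fun i _ => hw i) ⟨a, by simp; omega⟩)

lemma harmonic {r l : ℤ → ℝ} (hrl : r x + l x = 1) (hbal : r x * w x = l x * w (x - 1))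
    (hxa : x ≠ a) (hxb : x ≠ b) :
    r x * ruinProb w a b (x + 1) + l x * ruinProb w a b (x - 1) = ruinProb w a b x := by
  rcases lt_trichotomy x a with hx | rfl | hx
  · rw [eq_left_of_le (by omega : x + 1 ≤ a), eq_left_of_le (by omega : x - 1 ≤ a),
      eq_left_of_le hx.le,
      ← add_mul, hrl, one_mul]
  · exact absurd rfl hxa
  rcases lt_or_gt_of_ne hxb with hxb | hxb
  · have hup := sub_add_one (w := w) hx.le hxb
    have hdown := sub_add_one (w := w) (b := b) (by omega : a ≤ x - 1) (by omega)
    rw [sub_add_cancel] at hdown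
    have hD := congrArg (· / ∑ i ∈ Icc a (b - 1), w i) hbal
    simp only [mul_div_assoc, ← hup, ← hdown] at hD
    linear_combination -hD + ruinProb w a b x * hrl
  · rw [eq_zero_of_ge (by omega : b ≤ x + 1), eq_zero_of_ge (by omega : b ≤ x - 1),
      eq_zero_of_ge hxb.le]
    ring

end ruinProb

section StoppedProcess

variable {Ω β : Type*} {m0 : MeasurableSpace Ω}

lemma stoppedProcess_add_one [AddZeroClass β] (u : ℕ → Ω → β) (τ : Ω → WithTop ℕ) (n : ℕ) :
    stoppedProcess u τ (n + 1) = {ω | τ ω ≤ n}.indicator (stoppedProcess u τ n)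
      + {ω | τ ω ≤ n}ᶜ.indicator (u (n + 1)) := by
  ext ω
  set A := {ω | τ ω ≤ n}
  by_cases hω : τ ω ≤ n
  · have hω' : τ ω ≤ (n + 1 : ℕ) := hω.trans (WithTop.coe_le_coe.2 n.le_succ)
    rw [Pi.add_apply, Set.indicator_of_mem (s := A) hω,
      Set.indicator_of_notMem (s := Aᶜ) (fun h => h hω), add_zero,
      stoppedProcess_eq_of_ge (u := u) (i := n + 1) hω',
      stoppedProcess_eq_of_ge (u := u) (i := n) hω]
  · have hω' : ((n + 1 : ℕ) : WithTop ℕ) ≤ τ ω := by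
      exact_mod_cast ENat.natCast_add_one_le_iff.2 (not_le.1 hω)
    rw [Pi.add_apply, Set.indicator_of_notMem (s := A) hω, Set.indicator_of_mem (s := Aᶜ) hω,
      zero_add, stoppedProcess_eq_of_le (u := u) (i := n + 1) hω']

lemma martingale_stoppedProcess_of_ae_condExp_eq {μ : Measure Ω} [IsFiniteMeasure μ]
    {ℱ : Filtration ℕ m0} {X : ℕ → Ω → ℝ} {τ : Ω → WithTop ℕ} (hX : StronglyAdapted ℱ X)
    (hint : ∀ n, Integrable (X n) μ) (hτ : IsStoppingTime ℱ τ)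
    (hstep : ∀ n : ℕ, ∀ᵐ ω ∂μ, (n : WithTop ℕ) < τ ω → μ[X (n + 1) | ℱ n] ω = X n ω) :
    Martingale (stoppedProcess X τ) ℱ μ := by
  have hM := hX.stoppedProcess_of_discrete hτ
  have hMint := integrable_stoppedProcess hτ hint
  refine martingale_nat hM hMint fun n => ?_
  set A := {ω | τ ω ≤ n}
  have hA : MeasurableSet[ℱ n] A := hτ n
  filter_upwards [condExp_add ((hMint n).indicator (ℱ.le n _ hA))
      ((hint (n + 1)).indicator (ℱ.le n _ hA.compl)) (ℱ n),
    condExp_indicator (hint (n + 1)) hA.compl, hstep n] with ω hadd hind hcond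
  rw [stoppedProcess_add_one, hadd, Pi.add_apply, hind, condExp_of_stronglyMeasurable (ℱ.le n)
    ((hM n).indicator hA) ((hMint n).indicator (ℱ.le n _ hA))]
  by_cases hω : τ ω ≤ n
  · rw [Set.indicator_of_mem (s := A) hω, Set.indicator_of_notMem (s := Aᶜ) (fun h => h hω),
      add_zero]
  · rw [Set.indicator_of_notMem (s := A) hω, Set.indicator_of_mem (s := Aᶜ) hω, zero_add,
      hcond (not_le.1 hω), stoppedProcess_eq_of_le (u := X) (i := n) (not_le.1 hω).le]

end StoppedProcess

section Hitting

variable {Ω β : Type*}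

lemma hitTime_eq_hittingAfter (ξ : ℕ → Ω → ℤ) (c : ℤ) :
    hitTime ξ c = hittingAfter ξ {c} 0 := by
  ext1 ω
  refine le_antisymm ?_ (le_sInf ?_)
  · rcases eq_or_ne (hittingAfter ξ {c} 0 ω) ⊤ with htop | hτ
    · exact htop ▸ le_top
    obtain ⟨N, hN⟩ := WithTop.ne_top_iff_exists.1 hτ
    have hc := hittingAfter_mem_set_of_ne_top hτ
    rw [← hN] at hc ⊢
    exact sInf_le ⟨N, hc, rfl⟩
  · rintro _ ⟨k, hk, rfl⟩
    exact hittingAfter_le_of_mem (Nat.zero_le k) hk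

lemma hittingAfter_lt_hittingAfter_iff {u : ℕ → Ω → β} {a b : β} (hab : a ≠ b) {ω : Ω}
    (hτ : hittingAfter u {a, b} 0 ω ≠ ⊤) :
    hittingAfter u {a} 0 ω < hittingAfter u {b} 0 ω ↔
      stoppedValue u (hittingAfter u {a, b} 0) ω = a := by
  have hmem : stoppedValue u (hittingAfter u {a, b} 0) ω ∈ ({a, b} : Set β) :=
    hittingAfter_mem_set_of_ne_top hτ
  obtain ⟨N, hN⟩ := WithTop.ne_top_iff_exists.1 hτ
  have hτa : (N : WithTop ℕ) ≤ hittingAfter u {a} 0 ω :=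
    hN.trans_le <|
      hittingAfter_apply_anti u 0 ω (Set.singleton_subset_iff.2 (Set.mem_insert a {b}))
  have hτb : (N : WithTop ℕ) ≤ hittingAfter u {b} 0 ω :=
    hN.trans_le (hittingAfter_apply_anti u 0 ω (Set.subset_insert a {b}))
  have hvalue {c : β} (h : hittingAfter u {c} 0 ω = N) : u N ω = c := by
    have hc := hittingAfter_mem_set_of_ne_top (s := {c}) (h.trans_ne WithTop.coe_ne_top)
    rwa [h] at hc
  simp only [stoppedValue, ← hN, WithTop.untopD_coe] at hmem ⊢
  rcases hmem with ha | hb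
  · have hτa' := (hittingAfter_le_of_mem (Nat.zero_le N) ha).antisymm hτa
    refine iff_of_true (hτa'.trans_lt (hτb.lt_of_ne fun h => hab ?_)) ha
    rw [← ha, hvalue h.symm]
  · have hτb' := (hittingAfter_le_of_mem (Nat.zero_le N) hb).antisymm hτb
    exact iff_of_false (hτb'.trans_le hτa).not_gt (hb ▸ hab.symm)

end Hitting

section Paths

variable {x : ℕ → ℤ} {a b : ℤ}

lemma forall_mem_Icc_of_forall_notMem (hx0 : x 0 ∈ Set.Icc a b)
    (hstep : ∀ n, x (n + 1) = x n + 1 ∨ x (n + 1) = x n - 1)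
    (hne : ∀ n, x n ∉ ({a, b} : Set ℤ)) (n : ℕ) : x n ∈ Set.Icc a b := by
  induction n with
  | zero => exact hx0
  | succ n ih =>
    have := hne n
    simp only [Set.mem_insert_iff, Set.mem_singleton_iff, not_or] at this
    simp only [Set.mem_Icc] at ih ⊢
    rcases hstep n with h | h <;> omega

lemma not_tendsto_of_forall_mem_Icc {φ : ℤ → ℝ} (hφ : ∀ y ∈ Set.Ico a b, φ (y + 1) ≠ φ y)
    (hx : ∀ n, x n ∈ Set.Icc a b) (hstep : ∀ n, x (n + 1) = x n + 1 ∨ x (n + 1) = x n - 1)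
    (L : ℝ) : ¬ Tendsto (fun n => φ (x n)) atTop (𝓝 L) := by
  intro hL
  have hab : (Finset.Ico a b).Nonempty := by
    have := hx 0; have := hx 1; simp only [Set.mem_Icc] at *
    refine ⟨a, Finset.mem_Ico.2 ?_⟩
    rcases hstep 0 with h | h <;> simp only [zero_add] at h <;> omega
  set c := (Finset.Ico a b).inf' hab fun y => |φ (y + 1) - φ y|
  have hc : 0 < c := (Finset.lt_inf'_iff hab).2 fun y hy =>
    abs_pos.2 (sub_ne_zero.2 (hφ y (by simpa using hy)))
  have hgap : ∀ n, c ≤ |φ (x (n + 1)) - φ (x n)| := by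
    intro n
    have := hx n; have := hx (n + 1); simp only [Set.mem_Icc] at *
    rcases hstep n with h | h
    · rw [h]
      exact Finset.inf'_le _ (by simp only [Finset.mem_Ico]; omega)
    · rw [abs_sub_comm, h, ← sub_add_cancel (x n) 1, add_sub_cancel_right]
      exact Finset.inf'_le _ (by simp only [Finset.mem_Ico]; omega)
  have hdiff : Tendsto (fun n => φ (x (n + 1)) - φ (x n)) atTop (𝓝 0) := by
    simpa using (hL.comp (tendsto_add_atTop_nat 1)).sub hL
  obtain ⟨n, hn⟩ := (Metric.tendsto_nhds.1 hdiff c hc).exists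
  rw [Real.dist_eq, sub_zero] at hn
  exact (hgap n).not_gt hn

end Paths

structure IsNearestNeighborWalk {Ω : Type*} {m0 : MeasurableSpace Ω} (μ : Measure Ω)
    (ℱ : Filtration ℕ m0) (ξ : ℕ → Ω → ℤ) (r l : ℤ → ℝ) : Prop where
  adapted : Adapted ℱ ξ
  condExp_up : ∀ n : ℕ, μ[Set.indicator {ω | ξ (n + 1) ω = ξ n ω + 1} (fun _ => (1 : ℝ)) | ℱ n]
    =ᵐ[μ] fun ω => r (ξ n ω)
  condExp_down : ∀ n : ℕ, μ[Set.indicator {ω | ξ (n + 1) ω = ξ n ω - 1} (fun _ => (1 : ℝ)) | ℱ n]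
    =ᵐ[μ] fun ω => l (ξ n ω)

namespace IsNearestNeighborWalk

variable {Ω : Type*} {m0 : MeasurableSpace Ω} {μ : Measure Ω} {ℱ : Filtration ℕ m0}
  {ξ : ℕ → Ω → ℤ} {r l : ℤ → ℝ}

lemma measurableSet_step (hw : IsNearestNeighborWalk μ ℱ ξ r l) (n : ℕ) (f : ℤ → ℤ) :
    MeasurableSet {ω | ξ (n + 1) ω = f (ξ n ω)} :=
  measurableSet_eq_fun hw.adapted.measurable
    ((measurable_of_countable f).comp hw.adapted.measurable)

variable [IsProbabilityMeasure μ]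

lemma ae_step (hw : IsNearestNeighborWalk μ ℱ ξ r l) (hrl : ∀ x, r x + l x = 1) :
    ∀ᵐ ω ∂μ, ∀ n, ξ (n + 1) ω = ξ n ω + 1 ∨ ξ (n + 1) ω = ξ n ω - 1 := by
  rw [ae_all_iff]
  intro n
  set U := {ω | ξ (n + 1) ω = ξ n ω + 1}
  set W := {ω | ξ (n + 1) ω = ξ n ω - 1}
  have hU : MeasurableSet U := hw.measurableSet_step n (· + 1)
  have hW : MeasurableSet W := hw.measurableSet_step n (· - 1)
  have hdisj : Disjoint U W := Set.disjoint_left.2 fun ω (hωU : _ = _) (hωW : _ = _) => by omega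
  have hcond : μ[U.indicator (fun _ => (1 : ℝ)) + W.indicator (fun _ => 1) | ℱ n]
      =ᵐ[μ] fun _ => 1 := by
    filter_upwards [condExp_add ((integrable_const (1 : ℝ)).indicator hU)
      ((integrable_const (1 : ℝ)).indicator hW) (ℱ n), hw.condExp_up n, hw.condExp_down n]
      with ω hadd hup hdown
    rw [hadd, Pi.add_apply, hup, hdown, hrl]
  have hmeas : μ.real (U ∪ W) = 1 := calc
    μ.real (U ∪ W)
        = ∫ ω, (U.indicator (fun _ => (1 : ℝ)) + W.indicator (fun _ => 1) : Ω → ℝ) ω ∂μ := by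
      rw [integral_add' ((integrable_const (1 : ℝ)).indicator hU)
        ((integrable_const (1 : ℝ)).indicator hW), integral_indicator_const _ hU,
        integral_indicator_const _ hW, measureReal_union hdisj hW, smul_eq_mul, smul_eq_mul,
        mul_one, mul_one]
    _ = 1 := by
      rw [← integral_condExp (ℱ.le n), integral_congr_ae hcond, integral_const, probReal_univ,
        one_smul]
  exact mem_ae_iff.2 <|
    (prob_compl_eq_zero_iff (hU.union hW)).2 ((ENNReal.toReal_eq_one_iff _).1 hmeas)

lemma condExp_comp_succ (hw : IsNearestNeighborWalk μ ℱ ξ r l) (hrl : ∀ x, r x + l x = 1)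
    {φ : ℤ → ℝ} {C : ℝ} (hφ : ∀ x, |φ x| ≤ C) (n : ℕ) :
    μ[fun ω => φ (ξ (n + 1) ω) | ℱ n] =ᵐ[μ]
      fun ω => r (ξ n ω) * φ (ξ n ω + 1) + l (ξ n ω) * φ (ξ n ω - 1) := by
  set U := {ω | ξ (n + 1) ω = ξ n ω + 1}
  set W := {ω | ξ (n + 1) ω = ξ n ω - 1}
  have hU : MeasurableSet U := hw.measurableSet_step n (· + 1)
  have hW : MeasurableSet W := hw.measurableSet_step n (· - 1)
  have hφm : ∀ {ψ : Ω → ℤ}, Measurable[ℱ n] ψ → StronglyMeasurable[ℱ n] fun ω => φ (ψ ω) :=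
    fun hψ => ((measurable_of_countable φ).comp hψ).stronglyMeasurable
  have hint : ∀ {S : Set Ω}, MeasurableSet S → ∀ {ψ : Ω → ℤ}, Measurable[ℱ n] ψ →
      Integrable ((fun ω => φ (ψ ω)) * S.indicator (fun _ => 1)) μ := fun hS _ hψ =>
    ((integrable_const (1 : ℝ)).indicator hS).bdd_mul
      ((hφm hψ).mono (ℱ.le n)).aestronglyMeasurable
      (ae_of_all _ fun ω => (Real.norm_eq_abs _).trans_le (hφ _))
  have pull : ∀ {S : Set Ω}, MeasurableSet S → ∀ {ψ : Ω → ℤ}, Measurable[ℱ n] ψ →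
      μ[(fun ω => φ (ψ ω)) * S.indicator (fun _ => 1) | ℱ n]
        =ᵐ[μ] (fun ω => φ (ψ ω)) * μ[S.indicator (fun _ => 1) | ℱ n] := fun hS _ hψ =>
    condExp_mul_of_stronglyMeasurable_left (hφm hψ) (hint hS hψ)
      ((integrable_const (1 : ℝ)).indicator hS)
  have hup := (hw.adapted n).add_const 1
  have hdown := (hw.adapted n).sub_const 1
  have hsplit : (fun ω => φ (ξ (n + 1) ω)) =ᵐ[μ]
      (fun ω => φ (ξ n ω + 1)) * U.indicator (fun _ => 1)
        + (fun ω => φ (ξ n ω - 1)) * W.indicator (fun _ => 1) := by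
    filter_upwards [hw.ae_step hrl] with ω hω
    rcases hω n with h | h
    · have hW : ω ∉ W := fun (h' : _ = _) => by omega
      simp [Set.indicator_of_mem (show ω ∈ U from h), Set.indicator_of_notMem hW, h]
    · have hU : ω ∉ U := fun (h' : _ = _) => by omega
      simp [Set.indicator_of_mem (show ω ∈ W from h), Set.indicator_of_notMem hU, h]
  filter_upwards [condExp_congr_ae hsplit, condExp_add (hint hU hup) (hint hW hdown) (ℱ n),
    pull hU hup, pull hW hdown, hw.condExp_up n, hw.condExp_down n]
    with ω hsplit hadd hpullU hpullW hcondU hcondW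
  rw [hsplit, hadd, Pi.add_apply, hpullU, hpullW, Pi.mul_apply, Pi.mul_apply, hcondU, hcondW]
  ring

lemma martingale_stoppedProcess_comp (hw : IsNearestNeighborWalk μ ℱ ξ r l)
    (hrl : ∀ x, r x + l x = 1) {φ : ℤ → ℝ} {C : ℝ} (hφ : ∀ x, |φ x| ≤ C) {T : Set ℤ}
    (hharm : ∀ x ∉ T, r x * φ (x + 1) + l x * φ (x - 1) = φ x) :
    Martingale (stoppedProcess (fun n ω => φ (ξ n ω)) (hittingAfter ξ T 0)) ℱ μ := by
  have hφm : ∀ n, StronglyMeasurable[ℱ n] fun ω => φ (ξ n ω) := fun n =>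
    ((measurable_of_countable φ).comp (hw.adapted n)).stronglyMeasurable
  refine martingale_stoppedProcess_of_ae_condExp_eq hφm (fun n => ?_)
    (hw.adapted.isStoppingTime_hittingAfter (MeasurableSet.of_discrete)) fun n => ?_
  · exact Integrable.of_bound ((hφm n).mono (ℱ.le n)).aestronglyMeasurable C
      (ae_of_all _ fun ω => (Real.norm_eq_abs _).trans_le (hφ _))
  · filter_upwards [hw.condExp_comp_succ hrl hφ n] with ω hcond hlt
    exact hcond.trans (hharm _ (notMem_of_lt_hittingAfter (k := n) hlt (Nat.zero_le n)))

lemma ae_hittingAfter_ne_top (hw : IsNearestNeighborWalk μ ℱ ξ r l)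
    (hrl : ∀ x, r x + l x = 1) {a b z : ℤ} (hz : z ∈ Set.Icc a b) (h0 : ∀ ω, ξ 0 ω = z)
    {φ : ℤ → ℝ} {C : ℝ} (hφ : ∀ x, |φ x| ≤ C)
    (hharm : ∀ x ∉ ({a, b} : Set ℤ), r x * φ (x + 1) + l x * φ (x - 1) = φ x)
    (hφstep : ∀ y ∈ Set.Ico a b, φ (y + 1) ≠ φ y) :
    ∀ᵐ ω ∂μ, hittingAfter ξ {a, b} 0 ω ≠ ⊤ := by
  have hM := hw.martingale_stoppedProcess_comp hrl hφ hharm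
  have hbdd : ∀ n,
      eLpNorm (stoppedProcess (fun n ω => φ (ξ n ω)) (hittingAfter ξ {a, b} 0) n) 1 μ
        ≤ ENNReal.ofReal C := fun n =>
    (eLpNorm_le_of_ae_bound (ae_of_all _ fun ω => (Real.norm_eq_abs _).trans_le (hφ _))).trans_eq
      (by simp)
  filter_upwards [hM.submartingale.exists_ae_tendsto_of_bdd hbdd, hw.ae_step hrl]
    with ω ⟨L, hL⟩ hstep htop
  have hne := hittingAfter_eq_top_iff.1 htop
  refine not_tendsto_of_forall_mem_Icc hφstep
    (forall_mem_Icc_of_forall_notMem (h0 ω ▸ hz) hstep fun n => hne n (Nat.zero_le n)) hstep L ?_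
  convert hL using 2 with n
  rw [stoppedProcess_eq_of_le (htop ▸ le_top)]

theorem measure_hitTime_lt_hitTime (hw : IsNearestNeighborWalk μ ℱ ξ r l)
    (hrl : ∀ x, r x + l x = 1) {a b z : ℤ} (hz : z ∈ Set.Icc a b) (h0 : ∀ ω, ξ 0 ω = z)
    {φ : ℤ → ℝ} {C : ℝ} (hφ : ∀ x, |φ x| ≤ C)
    (hharm : ∀ x ∉ ({a, b} : Set ℤ), r x * φ (x + 1) + l x * φ (x - 1) = φ x)
    (ha : φ a = 1) (hb : φ b = 0) (hφstep : ∀ y ∈ Set.Ico a b, φ (y + 1) ≠ φ y) :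
    (μ {ω | hitTime ξ a ω < hitTime ξ b ω}).toReal = φ z := by
  have hab : a ≠ b := by rintro rfl; exact one_ne_zero (ha.symm.trans hb)
  set τ := hittingAfter ξ {a, b} 0
  set M := stoppedProcess (fun n ω => φ (ξ n ω)) τ
  set E := {ω | hitTime ξ a ω < hitTime ξ b ω}
  have hM : Martingale M ℱ μ := hw.martingale_stoppedProcess_comp hrl hφ hharm
  have hMC : ∀ n ω, ‖M n ω‖ ≤ C := fun n ω => (Real.norm_eq_abs _).trans_le (hφ _)
  have hE : MeasurableSet E := by
    have hτ (c : ℤ) :=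
      (hw.adapted.isStoppingTime_hittingAfter (s := {c}) (n := 0) .of_discrete).measurable'
    have hlt := measurableSet_lt (hτ a) (hτ b)
    simp only [E, hitTime_eq_hittingAfter]
    exact hlt
  have hlim : ∀ᵐ ω ∂μ, Tendsto (fun n => M n ω) atTop (𝓝 (E.indicator 1 ω)) := by
    filter_upwards [hw.ae_hittingAfter_ne_top hrl hz h0 hφ hharm hφstep] with ω hτ
    have hvalue : E.indicator 1 ω = φ (stoppedValue ξ τ ω) := by
      have hiff := hittingAfter_lt_hittingAfter_iff hab hτ
      rw [← hitTime_eq_hittingAfter, ← hitTime_eq_hittingAfter] at hiff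
      rcases hittingAfter_mem_set_of_ne_top hτ with h | h
      · rw [Set.indicator_of_mem (s := E) (hiff.2 h), Pi.one_apply, stoppedValue, h, ha]
      · rw [Set.indicator_of_notMem (s := E) fun hωE => hab ((hiff.1 hωE).symm.trans h),
          stoppedValue, Set.mem_singleton_iff.1 h, hb]
    obtain ⟨N, hN⟩ := WithTop.ne_top_iff_exists.1 hτ
    rw [hvalue]
    exact tendsto_atTop_of_eventually_const (i₀ := N) fun n hn =>
      stoppedProcess_eq_of_ge (hN.symm.trans_le (WithTop.coe_le_coe.2 hn))
  have hintegral : ∀ n, ∫ ω, M n ω ∂μ = φ z := fun n => by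
    rw [← setIntegral_univ, ← hM.setIntegral_eq (Nat.zero_le n) MeasurableSet.univ,
      setIntegral_univ]
    simp [M, stoppedProcess_eq_of_le, h0]
  calc (μ E).toReal = ∫ ω, E.indicator 1 ω ∂μ := (integral_indicator_one hE).symm
    _ = φ z := tendsto_nhds_unique (tendsto_integral_of_dominated_convergence (fun _ => C)
      (fun n => ((hM.stronglyMeasurable n).mono (ℱ.le n)).aestronglyMeasurable)
      (integrable_const C) (fun n => ae_of_all _ (hMC n)) hlim) (by simp [hintegral])

end IsNearestNeighborWalk

/-- Gambler's ruin for the RWRE: if `(ξ_n)` is the discrete-time random walk in the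
environment `ω` started at `z ∈ [a, b]`, then
`ℙ(τ_a < τ_b) = (∑_{i=z}^{b-1} e^{V(i)}) / (∑_{j=a}^{b-1} e^{V(j)})`. -/
theorem gamblers_ruin_rwre (ωm ωp : ℤ → ℝ) (hm : ∀ x, 0 < ωm x) (hp : ∀ x, 0 < ωp x)
    (a b z : ℤ) (hab : a < b) (haz : a ≤ z) (hzb : z ≤ b)
    {Ω : Type*} {m0 : MeasurableSpace Ω} (μ : Measure Ω) [IsProbabilityMeasure μ]
    (ℱ : Filtration ℕ m0) (ξ : ℕ → Ω → ℤ) (hadapted : Adapted ℱ ξ)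
    (h0 : ∀ ω', ξ 0 ω' = z)
    (hstep_up : ∀ n : ℕ,
      μ[Set.indicator {ω' | ξ (n + 1) ω' = ξ n ω' + 1} (fun _ => (1 : ℝ)) | ℱ n]
        =ᵐ[μ] fun ω' => ωp (ξ n ω') / (ωp (ξ n ω') + ωm (ξ n ω')))
    (hstep_down : ∀ n : ℕ,
      μ[Set.indicator {ω' | ξ (n + 1) ω' = ξ n ω' - 1} (fun _ => (1 : ℝ)) | ℱ n]
        =ᵐ[μ] fun ω' => ωm (ξ n ω') / (ωp (ξ n ω') + ωm (ξ n ω'))) :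
    (μ {ω' | hitTime ξ a ω' < hitTime ξ b ω'}).toReal =
      (∑ i ∈ Finset.Icc z (b - 1), Real.exp (potential ωm ωp i)) /
        (∑ j ∈ Finset.Icc a (b - 1), Real.exp (potential ωm ωp j)) := by
  set r : ℤ → ℝ := fun x => ωp x / (ωp x + ωm x)
  set l : ℤ → ℝ := fun x => ωm x / (ωp x + ωm x)
  set w : ℤ → ℝ := fun x => exp (potential ωm ωp x)
  have hwalk : IsNearestNeighborWalk μ ℱ ξ r l := ⟨hadapted, hstep_up, hstep_down⟩
  have hrl : ∀ x, r x + l x = 1 := fun x => by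
    rw [← add_div, div_self (add_pos (hp x) (hm x)).ne']
  have hbal : ∀ x, r x * w x = l x * w (x - 1) := fun x => by
    rw [div_mul_eq_mul_div, div_mul_eq_mul_div, mul_exp_potential ωm ωp hm hp]
  have hw : ∀ x, 0 < w x := fun x => exp_pos _
  rw [hwalk.measure_hitTime_lt_hitTime (φ := ruinProb w a b) (C := 1) hrl ⟨haz, hzb⟩ h0
    (fun _ => ruinProb.abs_le_one fun x => (hw x).le)
    (fun x hx => ruinProb.harmonic (hrl x) (hbal x) (fun h => hx (.inl h)) (fun h => hx (.inr h)))
    (ruinProb.left_eq_one hw hab) (ruinProb.eq_zero_of_ge le_rfl)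
    (fun y hy => ruinProb.add_one_ne hw hy.1 hy.2),
    ruinProb, max_eq_right haz]
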